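/- Unified in-expectation bound for NSGD with a general gradient estimator: let (g_t)_{t≥1} be any sequence of random vectors in ℝ^d with g_t ≠ 0 almost surely and E[‖g_t − ∇F(x_t)‖] < ∞, and run NSGD x_{t+1} = x_t − η_t·g_t/‖g_t‖ with deterministic step-sizes η_t > 0 for T iterations. Then ∑_{t=1}^T (η_t/∑_{τ=1}^T η_τ)·E[‖∇F(x_t)‖] ≤ ( Δ₁ + (L/2)·∑_{t=1}^T η_t² + 2·∑_{t=1}^T η_t·E[‖g_t − ∇F(x_t)‖] ) / ∑_{τ=1}^T η_τ. -/

import Mathlib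

/-!
For a normalized direction `u = g / ‖g‖` one has `⟪∇F p, u⟫ ≥ ‖∇F p‖ - 2 ‖g - ∇F p‖`, so the
descent lemma gives, deterministically on every sample path,
`F x_{t+1} ≤ F x_t - η_t ‖∇F x_t‖ + 2 η_t ‖g_t - ∇F x_t‖ + L η_t² / 2`.
Summing telescopes to `Δ₁`; integrating and dividing by `∑ η_τ` gives the bound.
-/

open MeasureTheory Finset
open scoped RealInnerProductSpace

section InnerProduct

variable {E : Type*} [NormedAddCommGroup E] [InnerProductSpace ℝ E]

theorem norm_sub_two_mul_norm_sub_le_inner_inv_norm_smul (a b : E) :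
    ‖a‖ - 2 * ‖b - a‖ ≤ ⟪a, ‖b‖⁻¹ • b⟫ := by
  rcases eq_or_ne b 0 with rfl | hb
  · simp [two_mul]
  have hb' : 0 < ‖b‖ := norm_pos_iff.2 hb
  have hinner : ‖b‖ ^ 2 - ‖b - a‖ * ‖b‖ ≤ ⟪a, b⟫ := by
    have := real_inner_le_norm (b - a) b
    rw [inner_sub_left, real_inner_self_eq_norm_sq] at this
    linarith
  have htri : ‖a‖ - ‖b - a‖ ≤ ‖b‖ := by
    linarith [norm_sub_norm_le a b, norm_sub_rev a b]
  rw [real_inner_smul_right, ← div_eq_inv_mul, le_div_iff₀ hb']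
  nlinarith

theorem norm_inv_norm_smul_le_one (b : E) : ‖‖b‖⁻¹ • b‖ ≤ 1 := by
  rw [norm_smul, norm_inv, norm_norm]
  exact inv_mul_le_one_of_le₀ le_rfl (norm_nonneg b)

section Smooth

variable [CompleteSpace E] {F : E → ℝ} {gradF : E → E} {L : ℝ}

theorem le_add_inner_add_half_mul_sq_of_lipschitz_gradient
    (hgrad : ∀ x, HasGradientAt F (gradF x) x)
    (hsmooth : ∀ x y, ‖gradF x - gradF y‖ ≤ L * ‖x - y‖) (x y : E) :
    F y ≤ F x + ⟪gradF x, y - x⟫ + L / 2 * ‖y - x‖ ^ 2 := by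
  set v := y - x
  -- `F` minus its quadratic upper model along the segment from `x` to `y`: it is antitone.
  set φ : ℝ → ℝ := fun s => F (x + s • v) - s * ⟪gradF x, v⟫ - L / 2 * s ^ 2 * ‖v‖ ^ 2
  have hφ : ∀ s, HasDerivAt φ (⟪gradF (x + s • v) - gradF x, v⟫ - L * s * ‖v‖ ^ 2) s := by
    intro s
    have hline : HasDerivAt (fun s : ℝ => x + s • v) v s := by
      simpa using ((hasDerivAt_id s).smul_const v).const_add x
    have hF := (hgrad (x + s • v)).hasFDerivAt.comp_hasDerivAt s hline
    have hquad := ((hasDerivAt_pow 2 s).const_mul (L / 2)).mul_const (‖v‖ ^ 2)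
    refine ((hF.sub ((hasDerivAt_id s).mul_const ⟪gradF x, v⟫)).sub hquad).congr_deriv ?_
    simp only [InnerProductSpace.toDual_apply_apply, inner_sub_left]
    push_cast
    ring
  have hφ' : ∀ s, 0 < s → ⟪gradF (x + s • v) - gradF x, v⟫ ≤ L * s * ‖v‖ ^ 2 := by
    intro s hs
    calc ⟪gradF (x + s • v) - gradF x, v⟫ ≤ ‖gradF (x + s • v) - gradF x‖ * ‖v‖ :=
          real_inner_le_norm _ _
      _ ≤ L * ‖s • v‖ * ‖v‖ := by
          gcongr
          simpa using hsmooth (x + s • v) x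
      _ = L * s * ‖v‖ ^ 2 := by
          rw [norm_smul, Real.norm_of_nonneg hs.le]
          ring
  have hanti : AntitoneOn φ (Set.Icc 0 1) := by
    refine antitoneOn_of_hasDerivWithinAt_nonpos (convex_Icc 0 1)
      (fun s _ => (hφ s).continuousAt.continuousWithinAt)
      (fun s _ => (hφ s).hasDerivWithinAt) fun s hs => ?_
    rw [interior_Icc] at hs
    linarith [hφ' s hs.1]
  have h01 := hanti (Set.left_mem_Icc.2 zero_le_one) (Set.right_mem_Icc.2 zero_le_one) zero_le_one
  simp only [φ, zero_smul, add_zero, one_smul, v, add_sub_cancel] at h01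
  linarith

theorem image_normalized_step_le (hL : 0 ≤ L)
    (hgrad : ∀ x, HasGradientAt F (gradF x) x)
    (hsmooth : ∀ x y, ‖gradF x - gradF y‖ ≤ L * ‖x - y‖) (p g : E) {s : ℝ} (hs : 0 ≤ s) :
    F (p - s • (‖g‖⁻¹ • g)) ≤
      F p - s * ‖gradF p‖ + 2 * s * ‖g - gradF p‖ + L / 2 * s ^ 2 := by
  have hdescent := le_add_inner_add_half_mul_sq_of_lipschitz_gradient hgrad hsmooth p
    (p - s • (‖g‖⁻¹ • g))
  have hinner := norm_sub_two_mul_norm_sub_le_inner_inv_norm_smul (gradF p) g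
  have hnorm : ‖s • (‖g‖⁻¹ • g)‖ ^ 2 ≤ s ^ 2 := by
    rw [norm_smul, Real.norm_of_nonneg hs, mul_pow]
    exact mul_le_of_le_one_right (sq_nonneg s)
      (pow_le_one₀ (norm_nonneg _) (norm_inv_norm_smul_le_one g))
  rw [sub_sub_cancel_left, inner_neg_right, norm_neg, real_inner_smul_right] at hdescent
  nlinarith [mul_le_mul_of_nonneg_left hinner hs, mul_le_mul_of_nonneg_left hnorm hL]

theorem sum_mul_norm_gradient_le_of_normalized_steps (hL : 0 ≤ L)
    (hgrad : ∀ x, HasGradientAt F (gradF x) x)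
    (hsmooth : ∀ x y, ‖gradF x - gradF y‖ ≤ L * ‖x - y‖)
    {η : ℕ → ℝ} (hη : ∀ t, 0 ≤ η t) {g x : ℕ → E}
    (hrec : ∀ t, 1 ≤ t → x (t + 1) = x t - η t • (‖g t‖⁻¹ • g t)) (N : ℕ) :
    ∑ t ∈ Icc 1 N, η t * ‖gradF (x t)‖ ≤
      F (x 1) - F (x (N + 1)) + L / 2 * ∑ t ∈ Icc 1 N, η t ^ 2
        + 2 * ∑ t ∈ Icc 1 N, η t * ‖g t - gradF (x t)‖ := by
  induction N with
  | zero => simp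
  | succ N ih =>
    have hN : 1 ≤ N + 1 := N.succ_pos
    have hstep := image_normalized_step_le hL hgrad hsmooth (x (N + 1)) (g (N + 1)) (hη (N + 1))
    rw [← hrec (N + 1) hN] at hstep
    simp only [sum_Icc_succ_top hN]
    linarith

end Smooth

end InnerProduct

theorem sum_mul_integral_le_integral_of_sum_mul_le {Ω ι : Type*} [MeasurableSpace Ω]
    {μ : Measure Ω} (s : Finset ι) {c : ι → ℝ} (hc : ∀ i ∈ s, 0 ≤ c i) {f : ι → Ω → ℝ}
    (hf : ∀ i ∈ s, 0 ≤ᵐ[μ] f i) {R : Ω → ℝ} (hR : Integrable R μ)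
    (hle : ∀ᵐ ω ∂μ, ∑ i ∈ s, c i * f i ω ≤ R ω) :
    ∑ i ∈ s, c i * ∫ ω, f i ω ∂μ ≤ ∫ ω, R ω ∂μ := by
  classical
  -- A non-integrable `f i` has Bochner integral `0`, so only the integrable ones contribute.
  set s' := s.filter fun i => Integrable (f i) μ
  have hs' : ∀ i ∈ s', Integrable (fun ω => c i * f i ω) μ :=
    fun i hi => ((mem_filter.1 hi).2).const_mul (c i)
  calc ∑ i ∈ s, c i * ∫ ω, f i ω ∂μ = ∑ i ∈ s', c i * ∫ ω, f i ω ∂μ := by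
        refine (sum_filter_of_ne fun i _ hi => ?_).symm
        by_contra hf'
        exact hi (by rw [integral_undef hf', mul_zero])
    _ = ∫ ω, ∑ i ∈ s', c i * f i ω ∂μ := by
        rw [integral_finsetSum s' hs']
        simp only [integral_const_mul]
    _ ≤ ∫ ω, R ω ∂μ := by
        refine integral_mono_ae (integrable_finsetSum s' hs') hR ?_
        filter_upwards [hle, (Filter.eventually_all_finset s).2 hf] with ω hω hfω
        refine le_trans (sum_le_sum_of_subset_of_nonneg (filter_subset _ s) ?_) hω
        exact fun i hi _ => mul_nonneg (hc i hi) (hfω i hi)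

theorem nsgd_unified_in_expectation_general
    {d : ℕ} {Ω : Type*} [MeasurableSpace Ω] (μ : Measure Ω) [IsProbabilityMeasure μ]
    (F : EuclideanSpace ℝ (Fin d) → ℝ)
    (gradF : EuclideanSpace ℝ (Fin d) → EuclideanSpace ℝ (Fin d))
    (L Fstar Δ₁ : ℝ) (hL : 0 ≤ L)
    -- F is differentiable with gradient `gradF` and is L-smooth
    (hgrad : ∀ x, HasGradientAt F (gradF x) x)
    (hsmooth : ∀ x y, ‖gradF x - gradF y‖ ≤ L * ‖x - y‖)
    -- F is bounded below by Fstar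
    (hlb : ∀ x, Fstar ≤ F x)
    -- horizon and deterministic positive step-sizes
    (T : ℕ)
    (η : ℕ → ℝ) (hη : ∀ t, 0 < η t)
    -- the gradient estimators: almost surely nonzero, with integrable deviation
    (g : ℕ → Ω → EuclideanSpace ℝ (Fin d))
    (x : ℕ → Ω → EuclideanSpace ℝ (Fin d))
    (x₁ : EuclideanSpace ℝ (Fin d)) (hx1 : ∀ ω, x 1 ω = x₁)
    (hΔ : F x₁ - Fstar ≤ Δ₁)
    (hint : ∀ t, Integrable (fun ω => ‖g t ω - gradF (x t ω)‖) μ)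
    -- the NSGD iterates
    (hrec : ∀ t ω, 1 ≤ t → x (t + 1) ω = x t ω - η t • (‖g t ω‖⁻¹ • g t ω)) :
    ∑ t ∈ Finset.Icc 1 T,
        (η t / ∑ τ ∈ Finset.Icc 1 T, η τ) * ∫ ω, ‖gradF (x t ω)‖ ∂μ ≤
      (Δ₁ + (L / 2) * ∑ t ∈ Finset.Icc 1 T, (η t) ^ 2
          + 2 * ∑ t ∈ Finset.Icc 1 T, η t * ∫ ω, ‖g t ω - gradF (x t ω)‖ ∂μ) /
        (∑ τ ∈ Finset.Icc 1 T, η τ) := by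
  have hη' : ∀ t, 0 ≤ η t := fun t => (hη t).le
  have hpath : ∀ ω, ∑ t ∈ Icc 1 T, η t * ‖gradF (x t ω)‖ ≤
      Δ₁ + L / 2 * ∑ t ∈ Icc 1 T, η t ^ 2 + 2 * ∑ t ∈ Icc 1 T, η t * ‖g t ω - gradF (x t ω)‖ := by
    intro ω
    have := sum_mul_norm_gradient_le_of_normalized_steps hL hgrad hsmooth hη'
      (x := fun t => x t ω) (fun t ht => hrec t ω ht) T
    rw [hx1] at this
    linarith [hlb (x (T + 1) ω)]
  have hdev : ∀ t ∈ Icc 1 T, Integrable (fun ω => η t * ‖g t ω - gradF (x t ω)‖) μ :=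
    fun t _ => (hint t).const_mul (η t)
  have hbound : Integrable (fun ω => Δ₁ + L / 2 * ∑ t ∈ Icc 1 T, η t ^ 2
      + 2 * ∑ t ∈ Icc 1 T, η t * ‖g t ω - gradF (x t ω)‖) μ :=
    (integrable_const _).add ((integrable_finsetSum _ hdev).const_mul 2)
  have hmean := sum_mul_integral_le_integral_of_sum_mul_le (Icc 1 T) (fun t _ => hη' t)
    (fun t _ => ae_of_all μ fun ω => norm_nonneg (gradF (x t ω))) hbound (ae_of_all μ hpath)
  rw [integral_add (integrable_const _) ((integrable_finsetSum _ hdev).const_mul 2),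
    integral_const, integral_const_mul, integral_finsetSum _ hdev] at hmean
  simp only [probReal_univ, one_smul, integral_const_mul] at hmean
  simp_rw [div_mul_eq_mul_div _ (∑ τ ∈ Icc 1 T, η τ), ← sum_div]
  exact div_le_div_of_nonneg_right hmean (sum_nonneg fun t _ => hη' t)

/-- unified in-expectation bound for NSGD with a general gradient estimator
sequence `(g_t)`: the step-size-weighted average of the expected gradient norms is bounded by
`(Δ₁ + (L/2)·∑ηₜ² + 2·∑ηₜ·E[‖gₜ − ∇F(xₜ)‖]) / ∑ητ`. -/
theorem nsgd_unified_in_expectation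
    {d : ℕ} {Ω : Type*} [MeasurableSpace Ω] (μ : Measure Ω) [IsProbabilityMeasure μ]
    (F : EuclideanSpace ℝ (Fin d) → ℝ)
    (gradF : EuclideanSpace ℝ (Fin d) → EuclideanSpace ℝ (Fin d))
    (L Fstar Δ₁ : ℝ) (hL : 0 ≤ L)
    -- F is differentiable with gradient `gradF` and is L-smooth
    (hgrad : ∀ x, HasGradientAt F (gradF x) x)
    (hsmooth : ∀ x y, ‖gradF x - gradF y‖ ≤ L * ‖x - y‖)
    -- F is bounded below by Fstar
    (hlb : ∀ x, Fstar ≤ F x)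
    -- horizon and deterministic positive step-sizes
    (T : ℕ) (hT : 1 ≤ T)
    (η : ℕ → ℝ) (hη : ∀ t, 0 < η t)
    -- the gradient estimators: almost surely nonzero, with integrable deviation
    (g : ℕ → Ω → EuclideanSpace ℝ (Fin d))
    (hgmeas : ∀ t, Measurable (g t))
    (x : ℕ → Ω → EuclideanSpace ℝ (Fin d))
    (x₁ : EuclideanSpace ℝ (Fin d)) (hx1 : ∀ ω, x 1 ω = x₁)
    (hΔ : F x₁ - Fstar ≤ Δ₁)
    (hgne : ∀ t, ∀ᵐ ω ∂μ, g t ω ≠ 0)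
    (hint : ∀ t, Integrable (fun ω => ‖g t ω - gradF (x t ω)‖) μ)
    -- the NSGD iterates
    (hrec : ∀ t ω, 1 ≤ t → x (t + 1) ω = x t ω - η t • (‖g t ω‖⁻¹ • g t ω)) :
    ∑ t ∈ Finset.Icc 1 T,
        (η t / ∑ τ ∈ Finset.Icc 1 T, η τ) * ∫ ω, ‖gradF (x t ω)‖ ∂μ ≤
      (Δ₁ + (L / 2) * ∑ t ∈ Finset.Icc 1 T, (η t) ^ 2
          + 2 * ∑ t ∈ Finset.Icc 1 T, η t * ∫ ω, ‖g t ω - gradF (x t ω)‖ ∂μ) /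
        (∑ τ ∈ Finset.Icc 1 T, η τ) :=
  nsgd_unified_in_expectation_general μ F gradF L Fstar Δ₁ hL hgrad hsmooth hlb T η hη g x x₁ hx1 hΔ
    hint hrec
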